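/- Let (a_n)_{n≥1} be a sequence of nonnegative bounded measurable functions on [0,T] and h a nonnegative integrable function on [0,T]. Suppose there exist constants α, β ≥ 0 such that for all n, m ≥ 1 and t ∈ [0,T]: a_{n+1,m}(t) ≤ α ∫_0^t a_{n+1,m}(s) ds + β ∫_0^t a_{n,m}(s) ds + ∫_0^t h(s) ds, where a_{n,m}(t) := sup_{r ≤ t} d_n,m(r) for functions d_{n,m} uniformly bounded on [0,T]. Then limsup_{n→∞} sup_{m≥1} a_{n,m}(t) ≤ e^{(α+β)t} ∫_0^t h(s) ds for all t ∈ [0,T]. -/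

import Mathlib

/-!
Fix `t`, write `H = ∫₀ᵗ h`, `A = α + β`, and let `M` bound the `d_{n,m}`, hence the `a_{n,m}`.
On `[0, t]` the recursion is dominated by the affine Volterra map `φ ↦ H + A ∫₀ˢ φ`, whose
`k`-th iterate on the constant `M` is `H ∑_{j<k} (A s)^j / j! + M (A s)^k / k!`. By induction
this bounds `a_{n+k,m}` uniformly in `n` and `m`, so it bounds the limsup for every `k`, and
as `k → ∞` it tends to `e^{A t} H`.
-/

open Set Filter MeasureTheory Topology
open scoped Nat

theorem Real.iSup_mem_Icc {ι : Sort*} [Nonempty ι] {f : ι → ℝ} {M : ℝ}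
    (hf : ∀ i, f i ∈ Icc 0 M) : ⨆ i, f i ∈ Icc 0 M :=
  ⟨Real.iSup_nonneg fun i => (hf i).1, ciSup_le fun i => (hf i).2⟩

theorem Measurable.integrableOn_of_mem_Icc {X : Type*} [MeasurableSpace X] {μ : Measure X}
    {f : X → ℝ} {s : Set X} {M : ℝ} (hf : Measurable f) (hs : MeasurableSet s) (hμs : μ s < ⊤)
    (hfM : ∀ x ∈ s, f x ∈ Icc 0 M) : IntegrableOn f s μ :=
  .of_bound hμs hf.aestronglyMeasurable M <| ae_restrict_of_forall_mem hs fun x hx => by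
    rw [Real.norm_of_nonneg (hfM x hx).1]; exact (hfM x hx).2

noncomputable def picardMajorant (A c M : ℝ) (k : ℕ) (s : ℝ) : ℝ :=
  c * ∑ j ∈ Finset.range k, (A * s) ^ j / j ! + M * ((A * s) ^ k / k !)

theorem continuous_picardMajorant (A c M : ℝ) (k : ℕ) : Continuous (picardMajorant A c M k) := by
  unfold picardMajorant; fun_prop

theorem mul_integral_pow_div_factorial (A t : ℝ) (j : ℕ) :
    A * ∫ s in (0 : ℝ)..t, (A * s) ^ j / j ! = (A * t) ^ (j + 1) / (j + 1)! := by
  simp only [mul_pow, intervalIntegral.integral_div, intervalIntegral.integral_const_mul,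
    integral_pow, Nat.factorial_succ]
  push_cast
  field_simp
  ring

theorem add_mul_integral_picardMajorant (A c M t : ℝ) (k : ℕ) :
    c + A * ∫ s in (0 : ℝ)..t, picardMajorant A c M k s = picardMajorant A c M (k + 1) t := by
  have hint : ∀ j, IntervalIntegrable (fun s : ℝ => (A * s) ^ j / j !) volume 0 t :=
    fun j => Continuous.intervalIntegrable (by fun_prop) 0 t
  have hsum :
      IntervalIntegrable (fun s : ℝ => ∑ j ∈ Finset.range k, (A * s) ^ j / j !) volume 0 t :=
    Continuous.intervalIntegrable (by fun_prop) 0 t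
  simp only [picardMajorant]
  rw [intervalIntegral.integral_add (hsum.const_mul c) ((hint k).const_mul M),
    intervalIntegral.integral_const_mul, intervalIntegral.integral_const_mul,
    Finset.sum_range_succ' _ k]
  simp only [← mul_integral_pow_div_factorial, ← Finset.mul_sum,
    ← intervalIntegral.integral_finsetSum fun j _ => hint j, pow_zero, Nat.factorial_zero,
    Nat.cast_one, div_one]
  ring

theorem tendsto_picardMajorant (A c M t : ℝ) :
    Tendsto (fun k => picardMajorant A c M k t) atTop (𝓝 (Real.exp (A * t) * c)) := by
  have hexp := (NormedSpace.expSeries_div_hasSum_exp (A * t)).tendsto_sum_nat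
  rw [← Real.exp_eq_exp_ℝ] at hexp
  rw [mul_comm, ← add_zero (c * _), ← mul_zero M]
  exact (hexp.const_mul c).add ((FloorSemiring.tendsto_pow_div_factorial_atTop (A * t)).const_mul M)

theorem le_picardMajorant {α β c M t : ℝ} (hα : 0 ≤ α) (hβ : 0 ≤ β) {f : ℕ → ℝ → ℝ}
    (hf_int : ∀ n, IntegrableOn (f n) (Icc 0 t)) (hf_le : ∀ n, ∀ s ∈ Icc 0 t, f n s ≤ M)
    (hrec : ∀ n, ∀ s ∈ Icc 0 t, f (n + 1) s ≤
      α * (∫ r in (0 : ℝ)..s, f (n + 1) r) + β * (∫ r in (0 : ℝ)..s, f n r) + c)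
    (k n : ℕ) : ∀ s ∈ Icc 0 t, f (n + k) s ≤ picardMajorant (α + β) c M k s := by
  induction k generalizing n with
  | zero => simpa [picardMajorant] using hf_le n
  | succ k ih =>
    intro s hs
    have hsub : Icc 0 s ⊆ Icc 0 t := Icc_subset_Icc_right hs.2
    have hint : ∀ n, ∫ r in (0 : ℝ)..s, f (n + k) r
        ≤ ∫ r in (0 : ℝ)..s, picardMajorant (α + β) c M k r := fun n =>
      intervalIntegral.integral_mono_on hs.1
        (((intervalIntegrable_iff_integrableOn_Icc_of_le hs.1).2 ((hf_int _).mono_set hsub)))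
        ((continuous_picardMajorant _ _ _ _).intervalIntegrable 0 s)
        fun r hr => ih n r (hsub hr)
    calc f (n + k + 1) s
        ≤ α * (∫ r in (0 : ℝ)..s, f (n + 1 + k) r) + β * (∫ r in (0 : ℝ)..s, f (n + k) r) + c := by
          simpa only [Nat.add_right_comm n k 1] using hrec (n + k) s hs
      _ ≤ α * (∫ r in (0 : ℝ)..s, picardMajorant (α + β) c M k r)
          + β * (∫ r in (0 : ℝ)..s, picardMajorant (α + β) c M k r) + c := by
          gcongr <;> exact hint _
      _ = picardMajorant (α + β) c M (k + 1) s := by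
          rw [← add_mul_integral_picardMajorant]; ring

theorem iterated_gronwall_picard_general
    (T α β : ℝ) (hα : 0 ≤ α) (hβ : 0 ≤ β)
    (d : ℕ → ℕ → ℝ → ℝ) (a : ℕ → ℕ → ℝ → ℝ)
    (hd_nonneg : ∀ n m r, 0 ≤ d n m r)
    (hd_bdd : ∃ M : ℝ, ∀ n m, ∀ r ∈ Icc (0 : ℝ) T, d n m r ≤ M)
    (ha : ∀ n m, ∀ t ∈ Icc (0 : ℝ) T, a n m t = ⨆ r : Icc (0 : ℝ) t, d n m r)
    (ha_meas : ∀ n m, Measurable (a n m))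
    (h : ℝ → ℝ) (hh_nonneg : ∀ s ∈ Icc (0 : ℝ) T, 0 ≤ h s)
    (hh_int : IntegrableOn h (Icc 0 T))
    (hrec : ∀ n m : ℕ, 1 ≤ n → 1 ≤ m → ∀ t ∈ Icc (0 : ℝ) T,
      a (n + 1) m t ≤ α * (∫ s in (0 : ℝ)..t, a (n + 1) m s)
        + β * (∫ s in (0 : ℝ)..t, a n m s) + ∫ s in (0 : ℝ)..t, h s) :
    ∀ t ∈ Icc (0 : ℝ) T,
      limsup (fun n => ⨆ m : {m : ℕ // 1 ≤ m}, a n (m : ℕ) t) atTop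
        ≤ Real.exp ((α + β) * t) * ∫ s in (0 : ℝ)..t, h s := by
  obtain ⟨M, hM⟩ := hd_bdd
  intro t ht
  have hsub : Icc 0 t ⊆ Icc 0 T := Icc_subset_Icc_right ht.2
  have ha_mem : ∀ n m, ∀ s ∈ Icc 0 t, a n m s ∈ Icc 0 M := fun n m s hs => by
    have : Nonempty (Icc 0 s) := ⟨⟨0, le_rfl, hs.1⟩⟩
    rw [ha n m s (hsub hs)]
    exact Real.iSup_mem_Icc fun r => ⟨hd_nonneg n m r, hM n m r ⟨r.2.1, r.2.2.trans (hsub hs).2⟩⟩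
  have hH : ∀ s ∈ Icc 0 t, ∫ r in (0 : ℝ)..s, h r ≤ ∫ r in (0 : ℝ)..t, h r := fun s hs =>
    intervalIntegral.integral_mono_interval le_rfl hs.1 hs.2
      (ae_restrict_of_forall_mem measurableSet_Ioc fun r hr =>
        hh_nonneg r (hsub (Ioc_subset_Icc_self hr)))
      ((intervalIntegrable_iff_integrableOn_Icc_of_le ht.1).2 (hh_int.mono_set hsub))
  have hbound : ∀ k n m, 1 ≤ m →
      a (n + k + 1) m t ≤ picardMajorant (α + β) (∫ s in (0 : ℝ)..t, h s) M k t :=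
    fun k n m hm => le_picardMajorant hα hβ (f := fun n => a (n + 1) m)
      (fun n => (ha_meas _ m).integrableOn_of_mem_Icc measurableSet_Icc measure_Icc_lt_top
        (ha_mem _ m))
      (fun n s hs => (ha_mem _ m s hs).2)
      (fun n s hs => (hrec (n + 1) m (by omega) hm s (hsub hs)).trans (by gcongr; exact hH s hs))
      k n t ⟨ht.1, le_rfl⟩
  have hsup_nonneg : ∀ n, 0 ≤ ⨆ m : {m : ℕ // 1 ≤ m}, a n m t := fun n =>
    Real.iSup_nonneg fun m => (ha_mem n m t ⟨ht.1, le_rfl⟩).1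
  have : Nonempty {m : ℕ // 1 ≤ m} := ⟨⟨1, le_rfl⟩⟩
  refine ge_of_tendsto' (tendsto_picardMajorant _ _ M t) fun k =>
    limsup_le_of_le (isBoundedUnder_of ⟨0, hsup_nonneg⟩).isCoboundedUnder_le ?_
  filter_upwards [eventually_gt_atTop k] with n hn
  obtain ⟨n, rfl⟩ : ∃ n', n = n' + k + 1 := ⟨n - k - 1, by omega⟩
  exact ciSup_le fun m => hbound k n m m.2

/-- Iterated Gronwall estimate for Picard iterates: if
`a_{n+1,m}(t) ≤ α ∫_0^t a_{n+1,m} + β ∫_0^t a_{n,m} + ∫_0^t h` with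
`a_{n,m}(t) = sup_{r ≤ t} d_{n,m}(r)` for uniformly bounded `d_{n,m}`, then
`limsup_n sup_{m≥1} a_{n,m}(t) ≤ e^{(α+β)t} ∫_0^t h`. -/
theorem iterated_gronwall_picard
    (T α β : ℝ) (hT : 0 ≤ T) (hα : 0 ≤ α) (hβ : 0 ≤ β)
    (d : ℕ → ℕ → ℝ → ℝ) (a : ℕ → ℕ → ℝ → ℝ)
    (hd_nonneg : ∀ n m r, 0 ≤ d n m r)
    (hd_bdd : ∃ M : ℝ, ∀ n m, ∀ r ∈ Icc (0 : ℝ) T, d n m r ≤ M)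
    (ha : ∀ n m, ∀ t ∈ Icc (0 : ℝ) T, a n m t = ⨆ r : Icc (0 : ℝ) t, d n m r)
    (ha_meas : ∀ n m, Measurable (a n m))
    (h : ℝ → ℝ) (hh_nonneg : ∀ s ∈ Icc (0 : ℝ) T, 0 ≤ h s)
    (hh_int : IntegrableOn h (Icc 0 T))
    (hrec : ∀ n m : ℕ, 1 ≤ n → 1 ≤ m → ∀ t ∈ Icc (0 : ℝ) T,
      a (n + 1) m t ≤ α * (∫ s in (0 : ℝ)..t, a (n + 1) m s)
        + β * (∫ s in (0 : ℝ)..t, a n m s) + ∫ s in (0 : ℝ)..t, h s) :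
    ∀ t ∈ Icc (0 : ℝ) T,
      limsup (fun n => ⨆ m : {m : ℕ // 1 ≤ m}, a n (m : ℕ) t) atTop
        ≤ Real.exp ((α + β) * t) * ∫ s in (0 : ℝ)..t, h s :=
  iterated_gronwall_picard_general T α β hα hβ d a hd_nonneg hd_bdd ha ha_meas h hh_nonneg hh_int
    hrec
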